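/- Let n ≥ 3 be a natural number, let c' ≥ 0 be an integer, and let A and B be finite sets of integers. The following are equivalent: (i) there exist nonempty finite sets of integers A_2, …, A_n with A_2 = A and A_n = B such that for every i with 2 ≤ i ≤ n−1 one has A_i = A_{i+1} ∪ {min A_i}, max A_i = max A_{i+1}, and 0 ≤ min A_{i+1} − min A_i ≤ c'; (ii) B is nonempty, B ⊆ A, the cardinality of A \ B is at most n−2, max(A \ B) < min B whenever A \ B is nonempty, and for all integers y, z such that z is the successor of y in (A \ B) ∪ {min B}, one has 0 ≤ z − y ≤ c'. -/

import Mathlib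

/-- Minimum of a finite set of integers (default 0 on the empty set). -/
def zmin (A : Finset ℤ) : ℤ := if h : A.Nonempty then A.min' h else 0

/-- Maximum of a finite set of integers (default 0 on the empty set). -/
def zmax (A : Finset ℤ) : ℤ := if h : A.Nonempty then A.max' h else 0

/-- `z` is the successor of `y` in the finite set `A`. -/
def isSucc (A : Finset ℤ) (y z : ℤ) : Prop :=
  y ∈ A ∧ z ∈ A ∧ y < z ∧ ∀ w ∈ A, w ≤ y ∨ z ≤ w

lemma zmin_mem {A : Finset ℤ} (h : A.Nonempty) : zmin A ∈ A := by
  simp only [zmin, dif_pos h]; exact A.min'_mem h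
lemma zmax_mem {A : Finset ℤ} (h : A.Nonempty) : zmax A ∈ A := by
  simp only [zmax, dif_pos h]; exact A.max'_mem h
lemma zmin_le {A : Finset ℤ} {x : ℤ} (hx : x ∈ A) : zmin A ≤ x := by
  have h : A.Nonempty := ⟨x, hx⟩
  simp only [zmin, dif_pos h]; exact Finset.min'_le _ _ hx
lemma le_zmax {A : Finset ℤ} {x : ℤ} (hx : x ∈ A) : x ≤ zmax A := by
  have h : A.Nonempty := ⟨x, hx⟩
  simp only [zmax, dif_pos h]; exact Finset.le_max' _ _ hx
lemma zmin_eq {A : Finset ℤ} {x : ℤ} (hx : x ∈ A) (h : ∀ y ∈ A, x ≤ y) : zmin A = x :=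
  le_antisymm (zmin_le hx) (h _ (zmin_mem ⟨x, hx⟩))

lemma zmax_union_eq {B T : Finset ℤ} (hB : B.Nonempty) (h : ∀ x ∈ T, x ≤ zmax B) :
    zmax (B ∪ T) = zmax B := by
  apply le_antisymm
  · rcases Finset.mem_union.1 (zmax_mem (hB.mono Finset.subset_union_left)) with h1 | h1
    · exact le_zmax h1
    · exact h _ h1
  · exact le_zmax (Finset.mem_union_left _ (zmax_mem hB))


theorem fwd (n : ℕ) (hn : 3 ≤ n) (c' : ℤ) (A B : Finset ℤ)
    (F : ℕ → Finset ℤ) (hF2 : F 2 = A) (hFn : F n = B)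
    (hne : ∀ i, 2 ≤ i → i ≤ n → (F i).Nonempty)
    (hstep : ∀ i, 2 ≤ i → i ≤ n - 1 →
      F i = F (i + 1) ∪ {zmin (F i)} ∧ zmax (F i) = zmax (F (i + 1)) ∧
      0 ≤ zmin (F (i + 1)) - zmin (F i) ∧ zmin (F (i + 1)) - zmin (F i) ≤ c') :
    B.Nonempty ∧ B ⊆ A ∧ (A \ B).card ≤ n - 2 ∧
      ((A \ B).Nonempty → zmax (A \ B) < zmin B) ∧
      ∀ y z : ℤ, isSucc ((A \ B) ∪ {zmin B}) y z → 0 ≤ z - y ∧ z - y ≤ c' := by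
  have hsub : ∀ i, 2 ≤ i → i + 1 ≤ n → F (i + 1) ⊆ F i := by
    intro i h2 hin
    rw [(hstep i h2 (by omega)).1]
    exact Finset.subset_union_left
  have hchain : ∀ i, 2 ≤ i → ∀ j, i ≤ j → j ≤ n → F j ⊆ F i := by
    intro i h2 j hij
    induction j, hij using Nat.le_induction with
    | base => exact fun _ => le_rfl
    | succ j hj ih =>
      intro hjn
      exact (hsub j (le_trans h2 hj) hjn).trans (ih (by omega))
  have hmono : ∀ i, 2 ≤ i → ∀ j, i ≤ j → j ≤ n → zmin (F i) ≤ zmin (F j) := by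
    intro i h2 j hij
    induction j, hij using Nat.le_induction with
    | base => exact fun _ => le_rfl
    | succ j hj ih =>
      intro hjn
      have := (hstep j (le_trans h2 hj) (by omega)).2.2.1
      have := ih (by omega)
      omega
  have hBne : B.Nonempty := hFn ▸ hne n (by omega) le_rfl
  have hBA : B ⊆ A := by rw [← hF2, ← hFn]; exact hchain 2 le_rfl n (by omega) le_rfl
  have hcard : ∀ d i, 2 ≤ i → i + d = n → (F i \ F n).card ≤ d := by
    intro d
    induction d with
    | zero =>
      intro i h2 hin
      have : i = n := by omega
      simp [this]
    | succ d ih =>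
      intro i h2 hin
      have h1 : F i \ F n ⊆ (F (i + 1) \ F n) ∪ {zmin (F i)} := by
        intro x hx
        rw [Finset.mem_sdiff] at hx
        have := (hstep i h2 (by omega)).1
        rw [this, Finset.mem_union] at hx
        rcases hx.1 with h | h
        · exact Finset.mem_union_left _ (Finset.mem_sdiff.2 ⟨h, hx.2⟩)
        · exact Finset.mem_union_right _ h
      calc (F i \ F n).card ≤ ((F (i + 1) \ F n) ∪ {zmin (F i)}).card := Finset.card_le_card h1
        _ ≤ (F (i + 1) \ F n).card + 1 := by
            refine le_trans (Finset.card_union_le _ _) ?_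
            simp
        _ ≤ d + 1 := by have := ih (i + 1) (by omega) (by omega); omega
  have hremove : ∀ x, x ∈ A \ B → ∃ i, 2 ≤ i ∧ i + 1 ≤ n ∧ x ∈ F i ∧ x ∉ F (i + 1) ∧
      x = zmin (F i) := by
    intro x hx
    rw [Finset.mem_sdiff] at hx
    have hex : ∃ i, 2 ≤ i ∧ i + 1 ≤ n ∧ x ∈ F i ∧ x ∉ F (i + 1) := by
      by_contra hcon
      push_neg at hcon
      have hall : ∀ j, 2 ≤ j → j ≤ n → x ∈ F j := by
        intro j h2
        induction j, h2 using Nat.le_induction with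
        | base => exact fun _ => hF2 ▸ hx.1
        | succ j hj ih =>
          intro hjn
          exact hcon j hj hjn (ih (by omega))
      exact hx.2 (hFn ▸ hall n (by omega) le_rfl)
    obtain ⟨i, h2, hin, hmem, hnmem⟩ := hex
    refine ⟨i, h2, hin, hmem, hnmem, ?_⟩
    have := (hstep i h2 (by omega)).1
    rw [this, Finset.mem_union] at hmem
    rcases hmem with h | h
    · exact absurd h hnmem
    · exact (Finset.mem_singleton.1 h)
  have hlt : ∀ x, x ∈ A \ B → x < zmin B := by
    intro x hx
    obtain ⟨i, h2, hin, hmem, hnmem, hxeq⟩ := hremove x hx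
    have hBFi : B ⊆ F (i + 1) := by
      rw [← hFn]; exact hchain (i + 1) (by omega) n (by omega) le_rfl
    have h1 : x ≤ zmin B := by
      have : zmin B ∈ F i := hsub i h2 hin (hBFi (zmin_mem hBne))
      exact hxeq ▸ zmin_le this
    rcases lt_or_eq_of_le h1 with h | h
    · exact h
    · exact absurd (hBFi (h ▸ zmin_mem hBne)) hnmem
  refine ⟨hBne, hBA, ?_, ?_, ?_⟩
  · have := hcard (n - 2) 2 le_rfl (by omega)
    rwa [hF2, hFn] at this
  · intro hD
    exact hlt _ (zmax_mem hD)
  · rintro y z ⟨hy, hz, hyz, hw⟩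
    have hzle : z ≤ zmin B := by
      rcases Finset.mem_union.1 hz with h | h
      · exact le_of_lt (hlt _ h)
      · exact le_of_eq (Finset.mem_singleton.1 h)
    rcases Finset.mem_union.1 hy with hyD | hyB
    · obtain ⟨i, h2, hin, hmem, hnmem, hxeq⟩ := hremove y hyD
      have hBFi : B ⊆ F (i + 1) := by
        rw [← hFn]; exact hchain (i + 1) (by omega) n (by omega) le_rfl
      have hzF : z ∈ F (i + 1) := by
        rcases Finset.mem_union.1 hz with h | h
        · obtain ⟨j, hj2, hjn, hjmem, hjnmem, hjeq⟩ := hremove z h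
          by_cases hji : j ≤ i
          · exfalso
            have := hmono j hj2 i hji (by omega)
            rw [← hjeq, ← hxeq] at this
            omega
          · exact hchain (i + 1) (by omega) j (by omega) (by omega) hjmem
        · rw [Finset.mem_singleton.1 h]
          exact hBFi (zmin_mem hBne)
      have hzeq : zmin (F (i + 1)) = z := by
        refine zmin_eq hzF ?_
        intro w hwF
        have hwFi : w ∈ F i := hsub i h2 hin hwF
        have hwy : y < w := by
          have := zmin_le hwFi
          rw [← hxeq] at this
          rcases lt_or_eq_of_le this with h | h
          · exact h
          · exact absurd (h ▸ hwF) hnmem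
        have hwA : w ∈ A := by rw [← hF2]; exact hchain 2 le_rfl i h2 (by omega) hwFi
        by_cases hwB : w ∈ B
        · exact le_trans hzle (zmin_le hwB)
        · have : w ∈ (A \ B) ∪ {zmin B} :=
            Finset.mem_union_left _ (Finset.mem_sdiff.2 ⟨hwA, hwB⟩)
          rcases hw w this with h | h
          · omega
          · exact h
      have := (hstep i h2 (by omega)).2.2
      rw [hzeq, ← hxeq] at this
      exact this
    · exfalso
      have hyeq : y = zmin B := Finset.mem_singleton.1 hyB
      rcases Finset.mem_union.1 hz with h | h
      · have := hlt _ h; omega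
      · have := Finset.mem_singleton.1 h; omega

theorem bwd (n : ℕ) (hn : 3 ≤ n) (c' : ℤ) (hc' : 0 ≤ c') (A B : Finset ℤ)
    (hBne : B.Nonempty) (hBA : B ⊆ A) (hcard : (A \ B).card ≤ n - 2)
    (hmax : (A \ B).Nonempty → zmax (A \ B) < zmin B)
    (hsucc : ∀ y z : ℤ, isSucc ((A \ B) ∪ {zmin B}) y z → 0 ≤ z - y ∧ z - y ≤ c') :
    ∃ F : ℕ → Finset ℤ, F 2 = A ∧ F n = B ∧
      (∀ i, 2 ≤ i → i ≤ n → (F i).Nonempty) ∧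
      (∀ i, 2 ≤ i → i ≤ n - 1 →
        F i = F (i + 1) ∪ {zmin (F i)} ∧ zmax (F i) = zmax (F (i + 1)) ∧
        0 ≤ zmin (F (i + 1)) - zmin (F i) ∧
        zmin (F (i + 1)) - zmin (F i) ≤ c') := by
  classical
  set D := A \ B with hD
  set L := D.sort (· ≤ ·) with hL
  have hlen : L.length = D.card := Finset.length_sort _
  have hsort : L.Pairwise (· < ·) := (Finset.sortedLT_sort D).pairwise
  have hmonoL : ∀ i j (hi : i < L.length) (hj : j < L.length), i < j → L[i] < L[j] :=
    fun i j hi hj hij => List.pairwise_iff_getElem.1 hsort i j hi hj hij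
  have hmemD : ∀ x, x ∈ L ↔ x ∈ D := fun x => Finset.mem_sort _
  have hDlt : ∀ x ∈ D, x < zmin B := fun x hx =>
    lt_of_le_of_lt (le_zmax hx) (hmax ⟨x, hx⟩)
  have hgetD : ∀ (j : ℕ) (hj : j < L.length), L[j] ∈ D :=
    fun j hj => (hmemD _).1 (List.getElem_mem hj)
  have hminB_le_max : zmin B ≤ zmax B := le_zmax (zmin_mem hBne)
  -- the min of each stage
  have hFmin : ∀ d : ℕ, zmin (B ∪ (L.drop d).toFinset) =
      if h : d < L.length then L[d] else zmin B := by
    intro d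
    by_cases h : d < L.length
    · rw [dif_pos h]
      apply zmin_eq
      · refine Finset.mem_union_right _ (List.mem_toFinset.2 ?_)
        rw [List.drop_eq_getElem_cons h]
        exact List.mem_cons_self
      · intro w hw
        rcases Finset.mem_union.1 hw with h1 | h1
        · exact le_of_lt (lt_of_lt_of_le (hDlt _ (hgetD d h)) (zmin_le h1))
        · rw [List.mem_toFinset] at h1
          obtain ⟨j, hj, hje⟩ := List.mem_iff_getElem.1 h1
          rw [List.getElem_drop] at hje
          subst hje
          rcases Nat.eq_zero_or_pos j with h0 | h0
          · simp [h0]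
          · exact le_of_lt (hmonoL d (d + j) h (by rw [List.length_drop] at hj; omega) (by omega))
    · rw [dif_neg h, List.drop_eq_nil_of_le (by omega), List.toFinset_nil,
        Finset.union_empty]
  refine ⟨fun i => B ∪ (L.drop (i - 2)).toFinset, ?_, ?_, ?_, ?_⟩
  · show B ∪ (L.drop 0).toFinset = A
    rw [List.drop_zero, hL, Finset.sort_toFinset, hD, Finset.union_sdiff_of_subset hBA]
  · show B ∪ (L.drop (n - 2)).toFinset = B
    rw [List.drop_eq_nil_of_le (by omega), List.toFinset_nil, Finset.union_empty]
  · exact fun i _ _ => hBne.mono Finset.subset_union_left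
  · intro i h2 hin
    set d := i - 2 with hd
    have hi1 : i + 1 - 2 = d + 1 := by omega
    beta_reduce
    rw [hi1]
    have key : 0 ≤ zmin (B ∪ (L.drop (d+1)).toFinset) - zmin (B ∪ (L.drop d).toFinset) ∧
        zmin (B ∪ (L.drop (d+1)).toFinset) - zmin (B ∪ (L.drop d).toFinset) ≤ c' := by
      rw [hFmin, hFmin]
      by_cases h : d < L.length
      · rw [dif_pos h]
        by_cases h1 : d + 1 < L.length
        · rw [dif_pos h1]
          apply hsucc
          refine ⟨Finset.mem_union_left _ (hgetD d h),
            Finset.mem_union_left _ (hgetD _ h1), hmonoL d (d+1) h h1 (by omega), ?_⟩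
          intro w hw
          rcases Finset.mem_union.1 hw with hw1 | hw1
          · obtain ⟨j, hj, hje⟩ := List.mem_iff_getElem.1 ((hmemD w).2 hw1)
            subst hje
            rcases le_or_gt j d with hjd | hjd
            · rcases lt_or_eq_of_le hjd with h' | h'
              · exact Or.inl (le_of_lt (hmonoL j d hj h h'))
              · subst h'; exact Or.inl le_rfl
            · rcases lt_or_eq_of_le (Nat.succ_le_of_lt hjd) with h' | h'
              · exact Or.inr (le_of_lt (hmonoL (d+1) j h1 hj h'))
              · exact Or.inr (le_of_eq (by subst h'; rfl))
          · rw [Finset.mem_singleton.1 hw1]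
            exact Or.inr (le_of_lt (hDlt _ (hgetD _ h1)))
        · rw [dif_neg h1]
          apply hsucc
          refine ⟨Finset.mem_union_left _ (hgetD d h),
            Finset.mem_union_right _ (Finset.mem_singleton_self _),
            hDlt _ (hgetD d h), ?_⟩
          intro w hw
          rcases Finset.mem_union.1 hw with hw1 | hw1
          · obtain ⟨j, hj, hje⟩ := List.mem_iff_getElem.1 ((hmemD w).2 hw1)
            subst hje
            have hjd : j ≤ d := by omega
            rcases lt_or_eq_of_le hjd with h' | h'
            · exact Or.inl (le_of_lt (hmonoL j d hj h h'))
            · subst h'; exact Or.inl le_rfl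
          · rw [Finset.mem_singleton.1 hw1]
            exact Or.inr le_rfl
      · rw [dif_neg h, dif_neg (by omega)]
        omega
    refine ⟨?_, ?_, key.1, key.2⟩
    · -- F i = F (i+1) ∪ {zmin (F i)}
      rw [hFmin]
      by_cases h : d < L.length
      · rw [dif_pos h, List.drop_eq_getElem_cons h, List.toFinset_cons]
        ext x
        simp only [Finset.mem_union, Finset.mem_insert, Finset.mem_singleton]
        tauto
      · rw [dif_neg h, List.drop_eq_nil_of_le (by omega),
          List.drop_eq_nil_of_le (by omega), List.toFinset_nil, Finset.union_empty]
        rw [eq_comm, Finset.union_eq_left]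
        simpa using zmin_mem hBne
    · -- zmax equal
      have hT : ∀ d' : ℕ, zmax (B ∪ (L.drop d').toFinset) = zmax B := by
        intro d'
        apply zmax_union_eq hBne
        intro x hx
        rw [List.mem_toFinset] at hx
        have : x ∈ D := (hmemD x).1 (List.mem_of_mem_drop hx)
        exact le_trans (le_of_lt (hDlt _ this)) hminB_le_max
      rw [hT, hT]


theorem stmt_6 (n : ℕ) (hn : 3 ≤ n) (c' : ℤ) (hc' : 0 ≤ c')
    (A B : Finset ℤ) :
    (∃ F : ℕ → Finset ℤ, F 2 = A ∧ F n = B ∧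
      (∀ i, 2 ≤ i → i ≤ n → (F i).Nonempty) ∧
      (∀ i, 2 ≤ i → i ≤ n - 1 →
        F i = F (i + 1) ∪ {zmin (F i)} ∧ zmax (F i) = zmax (F (i + 1)) ∧
        0 ≤ zmin (F (i + 1)) - zmin (F i) ∧
        zmin (F (i + 1)) - zmin (F i) ≤ c')) ↔
    (B.Nonempty ∧ B ⊆ A ∧ (A \ B).card ≤ n - 2 ∧
      ((A \ B).Nonempty → zmax (A \ B) < zmin B) ∧
      ∀ y z : ℤ, isSucc ((A \ B) ∪ {zmin B}) y z →
        0 ≤ z - y ∧ z - y ≤ c') := by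
  constructor
  · rintro ⟨F, hF2, hFn, hne, hstep⟩
    exact fwd n hn c' A B F hF2 hFn hne hstep
  · rintro ⟨hBne, hBA, hcard, hmax, hsucc⟩
    exact bwd n hn c' hc' A B hBne hBA hcard hmax hsucc
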